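/- arXiv:1308.3063 — 2 statements merged into one kernel-verified Lean document; each statement's English description precedes it below -/
import Mathlib

section
/- If all bonding maps ε_{ij} of a direct system of topological spaces are topological embeddings, then each canonical map ε_i : X_i → X into the direct limit (with the final topology) is a topological embedding. -/
open Topology

/-!
Two points of the limit coincide iff their images agree at some later stage. Hence a tower of
sets `V k ⊆ X k` with `ε k l ⁻¹' V l = V k` is exactly the family of preimages of
`W = ⋃ k, ι k '' V k`, and `W` is open as soon as every `V k` is. An open `U ⊆ X i` sits in an
open tower: below `i` take the preimages of `U`, above `i` extend one stage at a time, which is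
possible because each `ε k (k + 1)` is inducing. So `U = ι i ⁻¹' W` with `W` open.
-/

/-- The relation defining the direct limit of a direct system. -/
def DirLimRel {X : ℕ → Type*} (ε : ∀ i j, i ≤ j → X i → X j) :
    (Σ i, X i) → (Σ i, X i) → Prop :=
  fun p q =>
    (∃ h : p.1 ≤ q.1, ε p.1 q.1 h p.2 = q.2) ∨
    (∃ h : q.1 ≤ p.1, ε q.1 p.1 h q.2 = p.2)

/-- The direct limit of a direct system of sets. -/
def DirLim {X : ℕ → Type*} (ε : ∀ i j, i ≤ j → X i → X j) : Type _ :=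
  Quot (DirLimRel ε)

/-- The canonical map `ε_i : X_i → X` into the direct limit. -/
def DirLim.ι {X : ℕ → Type*} (ε : ∀ i j, i ≤ j → X i → X j) (i : ℕ) (x : X i) :
    DirLim ε :=
  Quot.mk _ ⟨i, x⟩

/-- The final topology on the direct limit with respect to the canonical maps. -/
def dirLimTopology {X : ℕ → Type*} [∀ i, TopologicalSpace (X i)]
    (ε : ∀ i j, i ≤ j → X i → X j) : TopologicalSpace (DirLim ε) :=
  ⨆ i, TopologicalSpace.coinduced (DirLim.ι ε i) inferInstance

namespace DirLim

variable {X : ℕ → Type*} {ε : ∀ i j, i ≤ j → X i → X j}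

theorem map_eq_map_of_le
    (hcomp : ∀ i j k (hij : i ≤ j) (hjk : j ≤ k) (x : X i),
      ε j k hjk (ε i j hij x) = ε i k (hij.trans hjk) x)
    {i j m M : ℕ} {hi : i ≤ m} {hj : j ≤ m} {x : X i} {y : X j} (hmM : m ≤ M)
    (h : ε i m hi x = ε j m hj y) :
    ε i M (hi.trans hmM) x = ε j M (hj.trans hmM) y := by
  rw [← hcomp _ _ _ hi hmM, h, hcomp]

theorem exists_map_eq_of_ι_eq
    (hcomp : ∀ i j k (hij : i ≤ j) (hjk : j ≤ k) (x : X i),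
      ε j k hjk (ε i j hij x) = ε i k (hij.trans hjk) x)
    {i j : ℕ} {x : X i} {y : X j} (h : ι ε i x = ι ε j y) :
    ∃ (m : ℕ) (hi : i ≤ m) (hj : j ≤ m), ε i m hi x = ε j m hj y := by
  let R (p q : Σ i, X i) : Prop :=
    ∃ (m : ℕ) (hp : p.1 ≤ m) (hq : q.1 ≤ m), ε p.1 m hp p.2 = ε q.1 m hq q.2
  have hR : Equivalence R :=
    { refl := fun p => ⟨p.1, le_rfl, le_rfl, rfl⟩
      symm := fun ⟨m, hp, hq, he⟩ => ⟨m, hq, hp, he.symm⟩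
      trans := fun ⟨m, hp, _, he⟩ ⟨m', _, hr, he'⟩ =>
        ⟨max m m', hp.trans (le_max_left _ _), hr.trans (le_max_right _ _),
          (map_eq_map_of_le hcomp (le_max_left _ _) he).trans
            (map_eq_map_of_le hcomp (le_max_right _ _) he')⟩ }
  have hrel : DirLimRel ε ≤ R := by
    rintro p q (⟨hpq, he⟩ | ⟨hqp, he⟩)
    · exact ⟨q.1, hpq, le_rfl, by rw [← hcomp _ _ _ hpq le_rfl, he]⟩
    · exact ⟨p.1, le_rfl, hqp, by rw [← hcomp _ _ _ hqp le_rfl, he]⟩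
  exact hR.eqvGen_iff.mp (Quot.eqvGen_exact h |>.mono hrel)

theorem ι_injective
    (hcomp : ∀ i j k (hij : i ≤ j) (hjk : j ≤ k) (x : X i),
      ε j k hjk (ε i j hij x) = ε i k (hij.trans hjk) x)
    {i : ℕ} (hinj : ∀ j (h : i ≤ j), Function.Injective (ε i j h)) :
    Function.Injective (ι ε i) := fun _ _ hxy =>
  let ⟨m, hi, _, he⟩ := exists_map_eq_of_ι_eq hcomp hxy
  hinj m hi he

theorem preimage_eq_of_preimage_succ_eq
    (hid : ∀ i (x : X i), ε i i le_rfl x = x)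
    (hcomp : ∀ i j k (hij : i ≤ j) (hjk : j ≤ k) (x : X i),
      ε j k hjk (ε i j hij x) = ε i k (hij.trans hjk) x)
    {V : ∀ k, Set (X k)} (hV : ∀ k, ε k (k + 1) k.le_succ ⁻¹' V (k + 1) = V k)
    {k l : ℕ} (hkl : k ≤ l) : ε k l hkl ⁻¹' V l = V k := by
  induction l, hkl using Nat.le_induction with
  | base => rw [show ε k k le_rfl = id from funext (hid k), Set.preimage_id]
  | succ l hkl ih =>
    rw [← funext (hcomp _ _ _ hkl l.le_succ), ← Set.preimage_preimage, hV, ih]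

theorem preimage_ι_iUnion_image
    (hcomp : ∀ i j k (hij : i ≤ j) (hjk : j ≤ k) (x : X i),
      ε j k hjk (ε i j hij x) = ε i k (hij.trans hjk) x)
    {V : ∀ k, Set (X k)} (hV : ∀ k l (h : k ≤ l), ε k l h ⁻¹' V l = V k) (j : ℕ) :
    ι ε j ⁻¹' ⋃ k, ι ε k '' V k = V j := by
  ext x
  simp only [Set.mem_preimage, Set.mem_iUnion, Set.mem_image]
  constructor
  · rintro ⟨k, y, hy, hyx⟩
    obtain ⟨m, hj, hk, he⟩ := exists_map_eq_of_ι_eq hcomp hyx.symm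
    rw [← hV j m hj, Set.mem_preimage, he, ← Set.mem_preimage, hV]
    exact hy
  · exact fun hx => ⟨j, x, hx, rfl⟩

variable [∀ i, TopologicalSpace (X i)]

theorem continuous_ι (i : ℕ) : Continuous[_, dirLimTopology ε] (ι ε i) :=
  continuous_iff_coinduced_le.mpr
    (le_iSup (fun j => TopologicalSpace.coinduced (ι ε j) inferInstance) i)

theorem isOpen_iUnion_image_ι
    (hcomp : ∀ i j k (hij : i ≤ j) (hjk : j ≤ k) (x : X i),
      ε j k hjk (ε i j hij x) = ε i k (hij.trans hjk) x)
    {V : ∀ k, Set (X k)} (hV : ∀ k l (h : k ≤ l), ε k l h ⁻¹' V l = V k)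
    (hVo : ∀ k, IsOpen (V k)) :
    IsOpen[dirLimTopology ε] (⋃ k, ι ε k '' V k) := by
  rw [dirLimTopology, isOpen_iSup_iff]
  intro k
  rw [isOpen_coinduced, preimage_ι_iUnion_image hcomp hV]
  exact hVo k

noncomputable def openTower (hind : ∀ i j h, IsInducing (ε i j h)) {i : ℕ} (U : Set (X i))
    (hU : IsOpen U) : ∀ k, {V : Set (X k) // IsOpen V}
  | 0 => ⟨ε 0 i i.zero_le ⁻¹' U, hU.preimage (hind _ _ _).continuous⟩
  | k + 1 =>
    if h : k + 1 ≤ i then ⟨ε (k + 1) i h ⁻¹' U, hU.preimage (hind _ _ _).continuous⟩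
    else
      have hext := (hind k (k + 1) k.le_succ).isOpen_iff.mp (openTower hind U hU k).2
      ⟨Classical.choose hext, (Classical.choose_spec hext).1⟩

theorem openTower_of_le (hind : ∀ i j h, IsInducing (ε i j h)) {i : ℕ} {U : Set (X i)}
    (hU : IsOpen U) {k : ℕ} (hk : k ≤ i) : (openTower hind U hU k).1 = ε k i hk ⁻¹' U := by
  cases k with
  | zero => rfl
  | succ k => simp only [openTower, dif_pos hk]

theorem preimage_openTower_succ
    (hcomp : ∀ i j k (hij : i ≤ j) (hjk : j ≤ k) (x : X i),
      ε j k hjk (ε i j hij x) = ε i k (hij.trans hjk) x)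
    (hind : ∀ i j h, IsInducing (ε i j h)) {i : ℕ} {U : Set (X i)} (hU : IsOpen U) (k : ℕ) :
    ε k (k + 1) k.le_succ ⁻¹' (openTower hind U hU (k + 1)).1 = (openTower hind U hU k).1 := by
  by_cases h : k + 1 ≤ i
  · rw [openTower_of_le hind hU h, openTower_of_le hind hU (k.le_succ.trans h),
      Set.preimage_preimage, funext (hcomp _ _ _ k.le_succ h)]
  · simp only [openTower, dif_neg h]
    exact (Classical.choose_spec
      ((hind k (k + 1) k.le_succ).isOpen_iff.mp (openTower hind U hU k).2)).2

theorem exists_isOpen_preimage_ι_eq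
    (hid : ∀ i (x : X i), ε i i le_rfl x = x)
    (hcomp : ∀ i j k (hij : i ≤ j) (hjk : j ≤ k) (x : X i),
      ε j k hjk (ε i j hij x) = ε i k (hij.trans hjk) x)
    (hind : ∀ i j h, IsInducing (ε i j h)) {i : ℕ} {U : Set (X i)} (hU : IsOpen U) :
    ∃ W, IsOpen[dirLimTopology ε] W ∧ ι ε i ⁻¹' W = U := by
  let V k := (openTower hind U hU k).1
  have hV : ∀ k l (h : k ≤ l), ε k l h ⁻¹' V l = V k := fun _ _ =>
    preimage_eq_of_preimage_succ_eq hid hcomp (preimage_openTower_succ hcomp hind hU)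
  refine ⟨_, isOpen_iUnion_image_ι hcomp hV fun k => (openTower hind U hU k).2, ?_⟩
  rw [preimage_ι_iUnion_image hcomp hV]
  change (openTower hind U hU i).1 = U
  rw [openTower_of_le hind hU le_rfl, show ε i i le_rfl = id from funext (hid i), Set.preimage_id]

end DirLim

theorem dirLim_ι_embedding_general {X : ℕ → Type*} [∀ i, TopologicalSpace (X i)]
    (ε : ∀ i j, i ≤ j → X i → X j)
    (hcomp : ∀ i j k (hij : i ≤ j) (hjk : j ≤ k) (x : X i),
      ε j k hjk (ε i j hij x) = ε i k (hij.trans hjk) x)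
    (hemb : ∀ i j (h : i ≤ j), Topology.IsEmbedding (ε i j h)) :
    ∀ i, @Topology.IsEmbedding _ _ _ (dirLimTopology ε) (DirLim.ι ε i) := by
  intro i
  let _ : TopologicalSpace (DirLim ε) := dirLimTopology ε
  -- an injective idempotent is the identity
  have hid : ∀ k (x : X k), ε k k le_rfl x = x := fun k x =>
    (hemb k k le_rfl).injective (hcomp k k k le_rfl le_rfl x)
  have hind : ∀ j k h, IsInducing (ε j k h) := fun j k h => (hemb j k h).isInducing
  refine ⟨⟨(DirLim.continuous_ι i).le_induced.antisymm fun U hU => ?_⟩, ?_⟩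
  · exact DirLim.exists_isOpen_preimage_ι_eq hid hcomp hind hU
  · exact DirLim.ι_injective hcomp fun j h => (hemb i j h).injective

/-- If all bonding maps of a direct system of topological spaces are topological
embeddings, then each canonical map `ε_i : X_i → X` into the direct limit,
equipped with the final topology, is a topological embedding. -/
theorem dirLim_ι_embedding {X : ℕ → Type*} [∀ i, TopologicalSpace (X i)]
    (ε : ∀ i j, i ≤ j → X i → X j)
    (hid : ∀ i (x : X i), ε i i le_rfl x = x)
    (hcomp : ∀ i j k (hij : i ≤ j) (hjk : j ≤ k) (x : X i),
      ε j k hjk (ε i j hij x) = ε i k (hij.trans hjk) x)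
    (hemb : ∀ i j (h : i ≤ j), Topology.IsEmbedding (ε i j h)) :
    ∀ i, @Topology.IsEmbedding _ _ _ (dirLimTopology ε) (DirLim.ι ε i) :=
  dirLim_ι_embedding_general ε hcomp hemb
end

section
/- The direct limit (as a set) of the tangent bundles TM_i is in bijection with the tangent bundle of the direct limit manifold M = colim M_i: every equivalence class of curves [f,x] in TM arises from some TM_i, and conversely. -/
/-!
Send the class of a curve in `M` that factors as `ι_i ∘ g` with `g` smooth in `M_i` to the image
of the velocity `g'(0)` in `colim TM_i`. Since the bonding maps are injective, two factorizations
of the same curve agree as maps into any common stage, and by the chain rule their velocities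
become equal there, so the map is well defined. It is injective because equal classes in
`colim TM_i` agree at some stage `l`, where they are the velocities of the curves pushed into
`M_l`; it is surjective because every tangent vector is the velocity of a globally defined smooth
curve, obtained in a chart from a straight line by the bounded reparametrization
`t ↦ c · arctan (t / c)`.
-/

open scoped Manifold

section

variable (E : ℕ → Type*) [∀ i, NormedAddCommGroup (E i)] [∀ i, NormedSpace ℝ (E i)]
  (M : ℕ → Type*) [∀ i, TopologicalSpace (M i)] [∀ i, ChartedSpace (E i) (M i)]
  [∀ i, IsManifold (𝓘(ℝ, E i)) ((⊤ : ℕ∞) : WithTop ℕ∞) (M i)]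
  (φ : ∀ i j, i ≤ j → M i → M j)

/-- The set direct limit `M = colim M_i`. -/
def DLM : Type _ := Quot (DirLimRel φ)

/-- The canonical maps `M_i → M`. -/
def DLM.ι (i : ℕ) (x : M i) : DLM M φ := Quot.mk _ ⟨i, x⟩

/-- A curve in `M = colim M_i` is smooth if it factors through some `M_i` via a
smooth curve. -/
def SmoothCurveDLM (c : ℝ → DLM M φ) : Prop :=
  ∃ (i : ℕ) (g : ℝ → M i), ContMDiff 𝓘(ℝ, ℝ) (𝓘(ℝ, E i)) (⊤ : ℕ∞) g ∧
    c = fun t => DLM.ι M φ i (g t)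

/-- Two smooth curves in `M` are tangentially equivalent if they factor through
a common `M_i` via smooth curves with the same value and velocity at `0`. -/
def KinRel (c c' : {c : ℝ → DLM M φ // SmoothCurveDLM E M φ c}) : Prop :=
  ∃ (i : ℕ) (g g' : ℝ → M i), ContMDiff 𝓘(ℝ, ℝ) (𝓘(ℝ, E i)) (⊤ : ℕ∞) g ∧
    ContMDiff 𝓘(ℝ, ℝ) (𝓘(ℝ, E i)) (⊤ : ℕ∞) g' ∧
    c.1 = (fun t => DLM.ι M φ i (g t)) ∧ c'.1 = (fun t => DLM.ι M φ i (g' t)) ∧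
    g 0 = g' 0 ∧
    mfderiv 𝓘(ℝ, ℝ) (𝓘(ℝ, E i)) g 0 (1 : ℝ) =
      mfderiv 𝓘(ℝ, ℝ) (𝓘(ℝ, E i)) g' 0 (1 : ℝ)

/-- The kinematic tangent bundle of `M = colim M_i`: equivalence classes of
smooth curves in `M`. -/
def KTM : Type _ := Quot (KinRel E M φ)

end

open scoped ContDiff

theorem exists_contDiff_curve_mem_ball {F : Type*} [NormedAddCommGroup F] [NormedSpace ℝ F]
    (y v : F) {ε : ℝ} (hε : 0 < ε) :
    ∃ u : ℝ → F, ContDiff ℝ ∞ u ∧ u 0 = y ∧ HasDerivAt u v 0 ∧ ∀ t, u t ∈ Metric.ball y ε := by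
  -- `|c * arctan (t / c)| < c * π / 2 < 2 * c`, and `2 * c * ‖v‖ < ε`.
  set c := ε / (2 * (‖v‖ + 1)) with hc
  have hc0 : 0 < c := by positivity
  have hderiv : HasDerivAt (fun t => c * Real.arctan (t / c)) 1 0 := by
    have := (((hasDerivAt_id (0 : ℝ)).div_const c).arctan).const_mul c
    simpa [hc0.ne'] using this
  refine ⟨fun t => y + (c * Real.arctan (t / c)) • v, ?_, by simp, ?_, fun t => ?_⟩
  · exact contDiff_const.add <| (contDiff_const.mul
      (Real.contDiff_arctan.comp (contDiff_id.div_const c))).smul contDiff_const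
  · simpa using (hderiv.smul_const v).const_add y
  · have harctan : |Real.arctan (t / c)| < 2 :=
      abs_lt.2 ⟨by linarith [Real.neg_pi_div_two_lt_arctan (t / c), Real.pi_lt_four],
        by linarith [Real.arctan_lt_pi_div_two (t / c), Real.pi_lt_four]⟩
    calc dist (y + (c * Real.arctan (t / c)) • v) y = c * |Real.arctan (t / c)| * ‖v‖ := by
          rw [dist_eq_norm, add_sub_cancel_left, norm_smul, Real.norm_eq_abs, abs_mul,
            abs_of_pos hc0]
      _ ≤ c * 2 * ‖v‖ := by gcongr
      _ < c * 2 * (‖v‖ + 1) := by gcongr; linarith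
      _ = ε := by rw [hc]; field_simp

theorem TangentBundle.mk_eq_mk_iff {𝕜 : Type*} [NontriviallyNormedField 𝕜] {E H : Type*}
    [NormedAddCommGroup E] [NormedSpace 𝕜 E] [TopologicalSpace H] (I : ModelWithCorners 𝕜 E H)
    {N : Type*} [TopologicalSpace N] [ChartedSpace H N] {x y : N}
    {v : TangentSpace I x} {w : TangentSpace I y} :
    (⟨x, v⟩ : TangentBundle I N) = ⟨y, w⟩ ↔ x = y ∧ (v : E) = w := by
  rw [Bundle.TotalSpace.ext_iff]
  constructor <;> rintro ⟨rfl, h⟩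
  exacts [⟨rfl, eq_of_heq h⟩, ⟨rfl, heq_of_eq h⟩]

section Velocity

variable {F : Type*} [NormedAddCommGroup F] [NormedSpace ℝ F]
  {N : Type*} [TopologicalSpace N] [ChartedSpace F N]

variable (F) in
noncomputable def velocity (g : ℝ → N) : TangentBundle 𝓘(ℝ, F) N :=
  ⟨g 0, mfderiv 𝓘(ℝ, ℝ) 𝓘(ℝ, F) g 0 1⟩

theorem velocity_eq_velocity_iff {g g' : ℝ → N} :
    velocity F g = velocity F g' ↔
      g 0 = g' 0 ∧ mfderiv 𝓘(ℝ, ℝ) 𝓘(ℝ, F) g 0 1 = mfderiv 𝓘(ℝ, ℝ) 𝓘(ℝ, F) g' 0 1 :=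
  TangentBundle.mk_eq_mk_iff _

theorem tangentMap_velocity {F' : Type*} [NormedAddCommGroup F'] [NormedSpace ℝ F']
    {N' : Type*} [TopologicalSpace N'] [ChartedSpace F' N'] {f : N → N'} {g : ℝ → N}
    (hf : MDifferentiableAt 𝓘(ℝ, F) 𝓘(ℝ, F') f (g 0)) (hg : MDifferentiableAt 𝓘(ℝ, ℝ) 𝓘(ℝ, F) g 0) :
    tangentMap 𝓘(ℝ, F) 𝓘(ℝ, F') f (velocity F g) = velocity F' (f ∘ g) := by
  simp only [tangentMap, velocity, mfderiv_comp 0 hf hg]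
  rfl

theorem exists_contMDiff_velocity_eq [IsManifold 𝓘(ℝ, F) ∞ N] (p : TangentBundle 𝓘(ℝ, F) N) :
    ∃ g : ℝ → N, ContMDiff 𝓘(ℝ, ℝ) 𝓘(ℝ, F) ∞ g ∧ velocity F g = p := by
  set e := extChartAt 𝓘(ℝ, F) p.proj
  obtain ⟨ε, hε, hball⟩ := Metric.isOpen_iff.1 (isOpen_extChartAt_target (I := 𝓘(ℝ, F)) p.proj) _
    (mem_extChartAt_target p.proj)
  obtain ⟨u, hu, hu0, hu', hu_mem⟩ := exists_contDiff_curve_mem_ball (e p.proj) p.snd hε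
  have hu_target : ∀ t, u t ∈ e.target := fun t => hball (hu_mem t)
  have he_symm : ∀ t, ContMDiffAt 𝓘(ℝ, F) 𝓘(ℝ, F) ∞ e.symm (u t) := fun t =>
    (contMDiffOn_extChartAt_symm p.proj).contMDiffAt
      ((isOpen_extChartAt_target (I := 𝓘(ℝ, F)) p.proj).mem_nhds (hu_target t))
  refine ⟨e.symm ∘ u, fun t => (he_symm t).comp t hu.contMDiff.contMDiffAt, ?_⟩
  have hsymm_deriv : mfderiv 𝓘(ℝ, F) 𝓘(ℝ, F) e.symm (u 0) = ContinuousLinearMap.id ℝ F := by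
    have := mfderivWithin_range_extChartAt_symm (I := 𝓘(ℝ, F)) (x := p.proj)
    rwa [modelWithCornersSelf_coe, Set.range_id, mfderivWithin_univ, ← hu0] at this
  refine (TangentBundle.mk_eq_mk_iff _).2 ⟨by simp [hu0, e], ?_⟩
  rw [mfderiv_comp 0 ((he_symm 0).mdifferentiableAt (by simp))
    (hu.contMDiff.mdifferentiable (by simp) 0), hsymm_deriv, mfderiv_eq_fderiv,
    hu'.hasFDerivAt.fderiv]
  exact one_smul ℝ _

end Velocity

namespace DirLimRel

variable {X : ℕ → Type*} {ε : ∀ i j, i ≤ j → X i → X j} [DirectedSystem X (ε · · ·)]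

theorem map_eq_map_of_le {i j l m : ℕ} {hi : i ≤ l} {hj : j ≤ l} {x : X i} {y : X j}
    (h : ε i l hi x = ε j l hj y) (hlm : l ≤ m) :
    ε i m (hi.trans hlm) x = ε j m (hj.trans hlm) y := by
  rw [← DirectedSystem.map_map (f := (ε · · ·)) hi hlm, h,
    DirectedSystem.map_map (f := (ε · · ·)) hj hlm]

theorem exists_map_eq_map_of_mk_eq {p q : Σ i, X i}
    (h : Quot.mk (DirLimRel ε) p = Quot.mk (DirLimRel ε) q) :
    ∃ l, ∃ (hp : p.1 ≤ l) (hq : q.1 ≤ l), ε p.1 l hp p.2 = ε q.1 l hq q.2 := by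
  have hgen := Quot.eqvGen_exact h
  clear h
  induction hgen with
  | rel a b hab =>
    rcases hab with ⟨hle, hab⟩ | ⟨hle, hab⟩
    · exact ⟨b.1, hle, le_rfl, hab.trans (DirectedSystem.map_self (f := (ε · · ·)) _).symm⟩
    · exact ⟨a.1, le_rfl, hle, (DirectedSystem.map_self (f := (ε · · ·)) _).trans hab.symm⟩
  | refl a => exact ⟨a.1, le_rfl, le_rfl, rfl⟩
  | symm a b _ ih =>
    obtain ⟨l, ha, hb, hl⟩ := ih
    exact ⟨l, hb, ha, hl.symm⟩
  | trans a b c _ _ ih₁ ih₂ =>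
    obtain ⟨l₁, ha, hb, h₁⟩ := ih₁
    obtain ⟨l₂, _, hc, h₂⟩ := ih₂
    exact ⟨max l₁ l₂, _, _, (map_eq_map_of_le h₁ (le_max_left l₁ l₂)).trans
      (map_eq_map_of_le h₂ (le_max_right l₁ l₂))⟩

theorem map_eq_map_of_mk_eq_of_injective (hinj : ∀ i j h, Function.Injective (ε i j h))
    {i j : ℕ} {x : X i} {y : X j}
    (h : Quot.mk (DirLimRel ε) ⟨i, x⟩ = Quot.mk (DirLimRel ε) ⟨j, y⟩)
    (l : ℕ) (hi : i ≤ l) (hj : j ≤ l) : ε i l hi x = ε j l hj y := by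
  obtain ⟨m, _, _, hm⟩ := exists_map_eq_map_of_mk_eq h
  apply hinj l (max m l) (le_max_right m l)
  rw [DirectedSystem.map_map (f := (ε · · ·)), DirectedSystem.map_map (f := (ε · · ·))]
  exact map_eq_map_of_le hm (le_max_left m l)

end DirLimRel

theorem DLM.ι_map {M : ℕ → Type*} {φ : ∀ i j, i ≤ j → M i → M j} {i j : ℕ} (h : i ≤ j)
    (x : M i) : DLM.ι M φ j (φ i j h x) = DLM.ι M φ i x := by
  refine (Quot.sound ?_).symm
  exact Or.inl ⟨h, rfl⟩

section ColimitTangent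

variable {E : ℕ → Type*} [∀ i, NormedAddCommGroup (E i)] [∀ i, NormedSpace ℝ (E i)]
  {M : ℕ → Type*} [∀ i, TopologicalSpace (M i)] [∀ i, ChartedSpace (E i) (M i)]
  {φ : ∀ i j, i ≤ j → M i → M j}

theorem directedSystem_tangentMap [DirectedSystem M (φ · · ·)]
    (hφ : ∀ i j h, MDifferentiable (𝓘(ℝ, E i)) (𝓘(ℝ, E j)) (φ i j h)) :
    DirectedSystem (fun i => TangentBundle (𝓘(ℝ, E i)) (M i))
      fun i j h => tangentMap (𝓘(ℝ, E i)) (𝓘(ℝ, E j)) (φ i j h) where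
  map_self i v := by
    rw [show φ i i le_rfl = id from funext fun x => DirectedSystem.map_self (f := (φ · · ·)) x,
      tangentMap_id]
    rfl
  map_map k j i hij hjk v := by
    rw [← Function.comp_apply (f := tangentMap _ _ _), ← tangentMap_comp (hφ j k hjk) (hφ i j hij),
      show φ j k hjk ∘ φ i j hij = φ i k (hij.trans hjk) from
        funext (DirectedSystem.map_map (f := (φ · · ·)) hij hjk)]

variable (E M φ) in
abbrev TangentDirLim : Type _ :=
  Quot (DirLimRel (X := fun i => TangentBundle (𝓘(ℝ, E i)) (M i))
    fun i j h => tangentMap (𝓘(ℝ, E i)) (𝓘(ℝ, E j)) (φ i j h))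

variable (E φ) in
noncomputable def velocityClass (i : ℕ) (g : ℝ → M i) : TangentDirLim E M φ :=
  Quot.mk _ ⟨i, velocity (E i) g⟩

theorem velocityClass_comp {i j : ℕ} (h : i ≤ j)
    (hφ : MDifferentiable (𝓘(ℝ, E i)) (𝓘(ℝ, E j)) (φ i j h)) {g : ℝ → M i}
    (hg : MDifferentiableAt 𝓘(ℝ, ℝ) (𝓘(ℝ, E i)) g 0) :
    velocityClass E φ j (φ i j h ∘ g) = velocityClass E φ i g := by
  refine (Quot.sound ?_).symm
  exact Or.inl ⟨h, tangentMap_velocity (hφ (g 0)) hg⟩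

theorem velocityClass_eq_of_ι_comp_eq [DirectedSystem M (φ · · ·)]
    (hφ : ∀ i j h, MDifferentiable (𝓘(ℝ, E i)) (𝓘(ℝ, E j)) (φ i j h))
    (hinj : ∀ i j h, Function.Injective (φ i j h)) {i j : ℕ} {g : ℝ → M i} {g' : ℝ → M j}
    (hg : MDifferentiableAt 𝓘(ℝ, ℝ) (𝓘(ℝ, E i)) g 0)
    (hg' : MDifferentiableAt 𝓘(ℝ, ℝ) (𝓘(ℝ, E j)) g' 0)
    (h : (fun t => DLM.ι M φ i (g t)) = fun t => DLM.ι M φ j (g' t)) :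
    velocityClass E φ i g = velocityClass E φ j g' := by
  have hcommon : φ i (max i j) (le_max_left i j) ∘ g = φ j (max i j) (le_max_right i j) ∘ g' :=
    funext fun t => DirLimRel.map_eq_map_of_mk_eq_of_injective hinj (congrFun h t) _ _ _
  rw [← velocityClass_comp (le_max_left i j) (hφ _ _ _) hg, hcommon,
    velocityClass_comp (le_max_right i j) (hφ _ _ _) hg']

noncomputable def curveVelocityClass (c : {c : ℝ → DLM M φ // SmoothCurveDLM E M φ c}) :
    TangentDirLim E M φ :=
  velocityClass E φ c.2.choose c.2.choose_spec.choose

theorem curveVelocityClass_eq [DirectedSystem M (φ · · ·)]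
    (hφ : ∀ i j h, MDifferentiable (𝓘(ℝ, E i)) (𝓘(ℝ, E j)) (φ i j h))
    (hinj : ∀ i j h, Function.Injective (φ i j h)) (c : {c : ℝ → DLM M φ // SmoothCurveDLM E M φ c})
    {i : ℕ} {g : ℝ → M i} (hg : MDifferentiableAt 𝓘(ℝ, ℝ) (𝓘(ℝ, E i)) g 0)
    (hc : c.1 = fun t => DLM.ι M φ i (g t)) :
    curveVelocityClass c = velocityClass E φ i g :=
  velocityClass_eq_of_ι_comp_eq hφ hinj
    (c.2.choose_spec.choose_spec.1.mdifferentiableAt (by simp)) hg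
    (c.2.choose_spec.choose_spec.2.symm.trans hc)

theorem curveVelocityClass_eq_of_kinRel [DirectedSystem M (φ · · ·)]
    (hφ : ∀ i j h, MDifferentiable (𝓘(ℝ, E i)) (𝓘(ℝ, E j)) (φ i j h))
    (hinj : ∀ i j h, Function.Injective (φ i j h))
    {c c' : {c : ℝ → DLM M φ // SmoothCurveDLM E M φ c}} (h : KinRel E M φ c c') :
    curveVelocityClass c = curveVelocityClass c' := by
  obtain ⟨k, g, g', hg, hg', hc, hc', h0, h1⟩ := h
  rw [curveVelocityClass_eq hφ hinj c (hg.mdifferentiableAt (by simp)) hc,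
    curveVelocityClass_eq hφ hinj c' (hg'.mdifferentiableAt (by simp)) hc']
  rw [velocityClass, velocityClass, velocity_eq_velocity_iff.2 ⟨h0, h1⟩]

noncomputable def KTM.toTangentDirLim [DirectedSystem M (φ · · ·)]
    (hsmooth : ∀ i j h, ContMDiff (𝓘(ℝ, E i)) (𝓘(ℝ, E j)) ∞ (φ i j h))
    (hinj : ∀ i j h, Function.Injective (φ i j h)) : KTM E M φ → TangentDirLim E M φ :=
  Quot.lift curveVelocityClass fun _ _ =>
    curveVelocityClass_eq_of_kinRel (fun i j h => (hsmooth i j h).mdifferentiable (by simp)) hinj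

theorem KTM.toTangentDirLim_mk [DirectedSystem M (φ · · ·)]
    (hsmooth : ∀ i j h, ContMDiff (𝓘(ℝ, E i)) (𝓘(ℝ, E j)) ∞ (φ i j h))
    (hinj : ∀ i j h, Function.Injective (φ i j h)) {i : ℕ} {g : ℝ → M i}
    (hg : ContMDiff 𝓘(ℝ, ℝ) (𝓘(ℝ, E i)) ∞ g) :
    KTM.toTangentDirLim hsmooth hinj (Quot.mk _ ⟨fun t => DLM.ι M φ i (g t), ⟨i, g, hg, rfl⟩⟩) =
      velocityClass E φ i g :=
  curveVelocityClass_eq (fun i j h => (hsmooth i j h).mdifferentiable (by simp)) hinj _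
    (hg.mdifferentiableAt (by simp)) rfl

theorem KTM.toTangentDirLim_injective [DirectedSystem M (φ · · ·)]
    (hsmooth : ∀ i j h, ContMDiff (𝓘(ℝ, E i)) (𝓘(ℝ, E j)) ∞ (φ i j h))
    (hinj : ∀ i j h, Function.Injective (φ i j h)) :
    Function.Injective (KTM.toTangentDirLim hsmooth hinj) := by
  have hφ := fun i j h => (hsmooth i j h).mdifferentiable (by simp)
  have := directedSystem_tangentMap hφ
  rintro ⟨c⟩ ⟨c'⟩ h
  obtain ⟨i, g, hg, hc⟩ := c.2
  obtain ⟨j, g', hg', hc'⟩ := c'.2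
  change curveVelocityClass c = curveVelocityClass c' at h
  rw [curveVelocityClass_eq hφ hinj c (hg.mdifferentiableAt (by simp)) hc,
    curveVelocityClass_eq hφ hinj c' (hg'.mdifferentiableAt (by simp)) hc'] at h
  obtain ⟨l, hi, hj, hl⟩ := DirLimRel.exists_map_eq_map_of_mk_eq h
  rw [tangentMap_velocity (hφ i l hi (g 0)) (hg.mdifferentiableAt (by simp)),
    tangentMap_velocity (hφ j l hj (g' 0)) (hg'.mdifferentiableAt (by simp))] at hl
  refine Quot.sound ⟨l, _, _, (hsmooth i l hi).comp hg, (hsmooth j l hj).comp hg', ?_, ?_,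
    velocity_eq_velocity_iff.1 hl⟩
  · rw [hc]; exact funext fun t => (DLM.ι_map hi (g t)).symm
  · rw [hc']; exact funext fun t => (DLM.ι_map hj (g' t)).symm

theorem KTM.toTangentDirLim_surjective [∀ i, IsManifold (𝓘(ℝ, E i)) ∞ (M i)]
    [DirectedSystem M (φ · · ·)]
    (hsmooth : ∀ i j h, ContMDiff (𝓘(ℝ, E i)) (𝓘(ℝ, E j)) ∞ (φ i j h))
    (hinj : ∀ i j h, Function.Injective (φ i j h)) :
    Function.Surjective (KTM.toTangentDirLim hsmooth hinj) := by
  rintro ⟨⟨i, p⟩⟩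
  obtain ⟨g, hg, rfl⟩ := exists_contMDiff_velocity_eq p
  exact ⟨_, KTM.toTangentDirLim_mk hsmooth hinj hg⟩

end ColimitTangent

theorem colim_tangent_bundles_bijective_tangent_colim_general
    (E : ℕ → Type*) [∀ i, NormedAddCommGroup (E i)] [∀ i, NormedSpace ℝ (E i)]
    (M : ℕ → Type*) [∀ i, TopologicalSpace (M i)] [∀ i, ChartedSpace (E i) (M i)]
    [∀ i, IsManifold (𝓘(ℝ, E i)) ((⊤ : ℕ∞) : WithTop ℕ∞) (M i)]
    (φ : ∀ i j, i ≤ j → M i → M j)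
    (hsmooth : ∀ i j (h : i ≤ j), ContMDiff (𝓘(ℝ, E i)) (𝓘(ℝ, E j)) (⊤ : ℕ∞) (φ i j h))
    (hclosed : ∀ i j (h : i ≤ j), Topology.IsClosedEmbedding (φ i j h))
    (hid : ∀ i, φ i i le_rfl = id)
    (hcomp : ∀ i j k (hij : i ≤ j) (hjk : j ≤ k),
      (φ j k hjk) ∘ (φ i j hij) = φ i k (hij.trans hjk)) :
    ∃ Θ : Quot (DirLimRel (X := fun i => TangentBundle (𝓘(ℝ, E i)) (M i))
        (fun i j h => tangentMap (𝓘(ℝ, E i)) (𝓘(ℝ, E j)) (φ i j h))) ≃ KTM E M φ,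
      ∀ (i : ℕ) (g : ℝ → M i) (hg : ContMDiff 𝓘(ℝ, ℝ) (𝓘(ℝ, E i)) (⊤ : ℕ∞) g),
        Θ (Quot.mk _ ⟨i, ⟨g 0, mfderiv 𝓘(ℝ, ℝ) (𝓘(ℝ, E i)) g 0 (1 : ℝ)⟩⟩) =
          Quot.mk _ ⟨fun t => DLM.ι M φ i (g t), ⟨i, g, hg, rfl⟩⟩ := by
  have : DirectedSystem M (φ · · ·) :=
    ⟨fun i x => congrFun (hid i) x, fun _ _ _ hij hjk x => congrFun (hcomp _ _ _ hij hjk) x⟩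
  have hinj : ∀ i j h, Function.Injective (φ i j h) := fun i j h => (hclosed i j h).injective
  refine ⟨(Equiv.ofBijective _ ⟨KTM.toTangentDirLim_injective hsmooth hinj,
    KTM.toTangentDirLim_surjective hsmooth hinj⟩).symm, fun i g hg => ?_⟩
  exact (Equiv.symm_apply_eq _).2 (KTM.toTangentDirLim_mk hsmooth hinj hg).symm

/-- For a direct sequence of paracompact finite-dimensional manifolds with
closed embeddings as bonding maps, the set direct limit of the tangent bundles
`TM_i` is in bijection with the kinematic tangent bundle of the direct limit
manifold `M = colim M_i`: every class of curves in `TM` comes from some `TM_i`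
and conversely.  The bijection sends the image in `colim TM_i` of the velocity
vector of a smooth curve `g` in `M_i` to the class of the curve `g` viewed in
`M`. -/
theorem colim_tangent_bundles_bijective_tangent_colim
    (E : ℕ → Type*) [∀ i, NormedAddCommGroup (E i)] [∀ i, NormedSpace ℝ (E i)]
    [∀ i, FiniteDimensional ℝ (E i)]
    (M : ℕ → Type*) [∀ i, TopologicalSpace (M i)] [∀ i, ChartedSpace (E i) (M i)]
    [∀ i, IsManifold (𝓘(ℝ, E i)) ((⊤ : ℕ∞) : WithTop ℕ∞) (M i)]
    [∀ i, ParacompactSpace (M i)]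
    (φ : ∀ i j, i ≤ j → M i → M j)
    (hsmooth : ∀ i j (h : i ≤ j), ContMDiff (𝓘(ℝ, E i)) (𝓘(ℝ, E j)) (⊤ : ℕ∞) (φ i j h))
    (hclosed : ∀ i j (h : i ≤ j), Topology.IsClosedEmbedding (φ i j h))
    (himm : ∀ i j (h : i ≤ j) (x : M i),
      Function.Injective (mfderiv (𝓘(ℝ, E i)) (𝓘(ℝ, E j)) (φ i j h) x))
    (hid : ∀ i, φ i i le_rfl = id)
    (hcomp : ∀ i j k (hij : i ≤ j) (hjk : j ≤ k),
      (φ j k hjk) ∘ (φ i j hij) = φ i k (hij.trans hjk)) :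
    ∃ Θ : Quot (DirLimRel (X := fun i => TangentBundle (𝓘(ℝ, E i)) (M i))
        (fun i j h => tangentMap (𝓘(ℝ, E i)) (𝓘(ℝ, E j)) (φ i j h))) ≃ KTM E M φ,
      ∀ (i : ℕ) (g : ℝ → M i) (hg : ContMDiff 𝓘(ℝ, ℝ) (𝓘(ℝ, E i)) (⊤ : ℕ∞) g),
        Θ (Quot.mk _ ⟨i, ⟨g 0, mfderiv 𝓘(ℝ, ℝ) (𝓘(ℝ, E i)) g 0 (1 : ℝ)⟩⟩) =
          Quot.mk _ ⟨fun t => DLM.ι M φ i (g t), ⟨i, g, hg, rfl⟩⟩ :=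
  colim_tangent_bundles_bijective_tangent_colim_general E M φ hsmooth hclosed hid hcomp
end
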